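/- Let R be a noetherian commutative ring satisfying conditions (G₀) and (S₂), and let I, J be ideals of R. If I·R_𝔯 ⊆ J·R_𝔯 for every prime ideal 𝔯 of R with ht(𝔯) ≤ 1, then I** ⊆ J** (as ideals of R under the canonical identification). -/

import Mathlib

section Defs2
variable (R : Type*) [CommRing R]

/-- `DepthGE A n` : the local ring `A` has depth at least `n`, i.e. there is a regular
sequence of length `n` contained in the maximal ideal. -/
def DepthGE (A : Type*) [CommRing A] [IsLocalRing A] (n : ℕ) : Prop :=
  ∃ rs : List A, rs.length = n ∧ (∀ r ∈ rs, r ∈ IsLocalRing.maximalIdeal A) ∧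
    RingTheory.Sequence.IsRegular A rs

/-- The height of a prime ideal. -/
noncomputable def primeHt (𝔯 : Ideal R) (h : 𝔯.IsPrime) : ℕ∞ :=
  Order.height (⟨𝔯, h⟩ : PrimeSpectrum R)

/-- Condition (G₀): the localization of `R` at every prime of height `0` is Gorenstein
(for a zero-dimensional local ring, Gorenstein means self-injective). -/
def CondG0 : Prop :=
  ∀ (𝔯 : Ideal R) (h : 𝔯.IsPrime), primeHt R 𝔯 h ≤ 0 →
    Module.Injective (Localization.AtPrime 𝔯) (Localization.AtPrime 𝔯)

/-- Serre's condition (Sₙ): `depth R_𝔯 ≥ min {n, ht 𝔯}` for every prime `𝔯`. -/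
def CondS (n : ℕ) : Prop :=
  ∀ (𝔯 : Ideal R) (h : 𝔯.IsPrime) (m : ℕ),
    (m : ℕ∞) ≤ min (n : ℕ∞) (primeHt R 𝔯 h) → DepthGE (Localization.AtPrime 𝔯) m

/-- The canonical map `I** → R** = R` for an ideal `I ⊆ R`. -/
noncomputable def bidualToRing (I : Ideal R) :
    Module.Dual R (Module.Dual R I) →ₗ[R] R where
  toFun φ := φ ((Submodule.subtype I).dualMap (LinearMap.id : R →ₗ[R] R))
  map_add' := by intros; rfl
  map_smul' := by intros; rfl
end Defs2

/-!
Since `I` is finitely generated, the hypothesis says that the colon ideal `J : I` lies in no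
prime of height at most one. Under (S₁) the associated primes of `R` are minimal, so by prime
avoidance `J : I` contains a nonzerodivisor `d`. Under (S₂) the associated primes of `R ⧸ dR`
have height at most one, so every `y` with `(J : I) y ⊆ dR` lies in `dR`. For `f ∈ J*` and
`x ∈ I` this applies to `y = f(dx)`, because `s f(dx) = d f(sx)` for `s ∈ J : I`. Hence
`f ↦ (x ↦ f(dx) / d)` is a map `J* → I*` sending the inclusion of `J` to that of `I`, and
precomposition with it carries `I**` into `J**` compatibly with the maps to `R`.
-/

open RingTheory.Sequence IsLocalRing
open scoped nonZeroDivisors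

section
variable {A : Type*} [CommRing A]

lemma mem_span_singleton_of_isWeaklyRegular_pair {a b d w : A}
    (hab : IsWeaklyRegular A [a, b]) (hd : IsSMulRegular A d)
    (ha : a * w ∈ Ideal.span {d}) (hb : b * w ∈ Ideal.span {d}) : w ∈ Ideal.span {d} := by
  rw [isWeaklyRegular_cons_iff, isWeaklyRegular_cons_iff] at hab
  obtain ⟨ha_reg, hb_reg, -⟩ := hab
  obtain ⟨w₁, hw₁⟩ := Ideal.mem_span_singleton'.mp ha
  obtain ⟨w₂, hw₂⟩ := Ideal.mem_span_singleton'.mp hb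
  have hba : b * w₁ = a * w₂ := hd <| by
    simp only [smul_eq_mul]
    linear_combination b * hw₁ - a * hw₂
  have hw₁a : (Submodule.Quotient.mk w₁ : QuotSMulTop a A) = 0 := hb_reg <| by
    show b • _ = b • 0
    rw [smul_zero, ← Submodule.Quotient.mk_smul, Submodule.Quotient.mk_eq_zero, smul_eq_mul, hba,
      Submodule.mem_smul_pointwise_iff_exists]
    exact ⟨w₂, trivial, rfl⟩
  rw [Submodule.Quotient.mk_eq_zero, Submodule.mem_smul_pointwise_iff_exists] at hw₁a
  obtain ⟨u, -, rfl⟩ := hw₁a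
  refine Ideal.mem_span_singleton'.mpr ⟨u, ha_reg ?_⟩
  simp only [smul_eq_mul] at hw₁ ⊢
  linear_combination hw₁

variable [IsLocalRing A]

lemma DepthGE.eq_zero_of_forall_mul_eq_zero (h : DepthGE A 1) {w : A}
    (hw : ∀ a ∈ maximalIdeal A, a * w = 0) : w = 0 := by
  obtain ⟨rs, hlen, hmem, hreg⟩ := h
  obtain ⟨a, rfl⟩ := List.length_eq_one_iff.mp hlen
  have ha : IsSMulRegular A a := ((isWeaklyRegular_cons_iff A a []).mp hreg.toIsWeaklyRegular).1
  refine ha (show a • w = a • 0 from ?_)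
  rw [smul_zero, smul_eq_mul, hw a (hmem a (List.mem_singleton_self a))]

lemma DepthGE.mem_span_singleton_of_forall_mul_mem (h : DepthGE A 2) {d w : A}
    (hd : IsSMulRegular A d) (hw : ∀ a ∈ maximalIdeal A, a * w ∈ Ideal.span {d}) :
    w ∈ Ideal.span {d} := by
  obtain ⟨rs, hlen, hmem, hreg⟩ := h
  obtain ⟨a, b, rfl⟩ := List.length_eq_two.mp hlen
  exact mem_span_singleton_of_isWeaklyRegular_pair hreg.toIsWeaklyRegular hd
    (hw a (hmem a (by simp))) (hw b (hmem b (by simp)))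

end

section
variable {R : Type*} [CommRing R] {P N : Ideal R} [P.IsPrime] {w : R}

lemma mul_algebraMap_mem_map_atPrime_iff (hw : ∀ t, t ∈ P ↔ t * w ∈ N)
    (a : Localization.AtPrime P) :
    a * algebraMap R _ w ∈ N.map (algebraMap R (Localization.AtPrime P)) ↔
      a ∈ maximalIdeal (Localization.AtPrime P) := by
  obtain ⟨t, s, rfl⟩ := IsLocalization.exists_mk'_eq P.primeCompl a
  rw [mul_comm, IsLocalization.mul_mk'_eq_mk'_of_mul, IsLocalization.mk'_mem_map_algebraMap_iff,
    IsLocalization.AtPrime.mk'_mem_maximal_iff (Localization.AtPrime P) P]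
  constructor
  · rintro ⟨u, hu, hut⟩
    rw [mul_comm w, ← mul_assoc, ← hw] at hut
    exact (‹P.IsPrime›.mem_or_mem hut).resolve_left hu
  · intro ht
    exact ⟨1, P.primeCompl.one_mem, by rw [one_mul, mul_comm, ← hw]; exact ht⟩

end

section
variable {R : Type*} [CommRing R]

lemma CondS.mono {n k : ℕ} (hS : CondS R n) (hkn : k ≤ n) : CondS R k :=
  fun P hP m hm => hS P hP m (hm.trans (min_le_min_right _ (by exact_mod_cast hkn)))

variable [IsNoetherianRing R]

lemma CondS.primeHt_eq_zero_of_isAssociatedPrime (hS : CondS R 1) {P : Ideal R}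
    (hP : IsAssociatedPrime P R) : primeHt R P hP.isPrime = 0 := by
  obtain ⟨hPp, w, hPw⟩ := isAssociatedPrime_iff.mp hP
  have hw : ∀ t, t ∈ P ↔ t * w ∈ (⊥ : Ideal R) := fun t => by
    rw [hPw, Submodule.mem_colon_singleton, smul_eq_mul]
  have hmem := mul_algebraMap_mem_map_atPrime_iff hw
  simp only [Ideal.map_bot, Ideal.mem_bot] at hmem
  by_contra h0
  have hdepth := hS P hPp 1 (le_min le_rfl (Order.one_le_iff_ne_zero.mpr h0))
  have hw0 := hdepth.eq_zero_of_forall_mul_eq_zero fun a ha => (hmem a).mpr ha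
  exact (maximalIdeal (Localization.AtPrime P)).one_notMem ((hmem 1).mp (by rw [one_mul, hw0]))

lemma CondS.exists_mem_nonZeroDivisors (hS : CondS R 1) {Q : Ideal R}
    (hQ : ∀ (P : Ideal R) (hP : P.IsPrime), primeHt R P hP = 0 → ¬ Q ≤ P) :
    ∃ d ∈ Q, d ∈ R⁰ := by
  by_contra! hQR
  obtain ⟨P, hPR, hQP⟩ : ∃ P ∈ associatedPrimes R R, Q ≤ P :=
    (Q.subset_union_prime_finite (associatedPrimes.finite R R) (f := id) 0 0
      fun _ hP _ _ => hP.isPrime).1 <|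
      biUnion_associatedPrimes_eq_compl_nonZeroDivisors R ▸ hQR
  exact hQ P hPR.isPrime (hS.primeHt_eq_zero_of_isAssociatedPrime hPR) hQP

lemma CondS.primeHt_le_one_of_isAssociatedPrime_quotient (hS : CondS R 2) {d : R} (hd : d ∈ R⁰)
    {P : Ideal R} (hP : IsAssociatedPrime P (R ⧸ Ideal.span {d})) :
    primeHt R P hP.isPrime ≤ 1 := by
  obtain ⟨hPp, x, hPx⟩ := isAssociatedPrime_iff.mp hP
  obtain ⟨w, rfl⟩ := Submodule.Quotient.mk_surjective _ x
  have hw : ∀ t, t ∈ P ↔ t * w ∈ Ideal.span {d} := fun t => by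
    rw [hPx, Submodule.mem_colon_singleton, Submodule.mem_bot, ← Submodule.Quotient.mk_smul,
      Submodule.Quotient.mk_eq_zero, smul_eq_mul]
  have hmem := mul_algebraMap_mem_map_atPrime_iff hw
  rw [Ideal.map_span, Set.image_singleton] at hmem
  by_contra h1
  have hdepth := hS P hPp 2 (le_min le_rfl (Order.add_one_le_of_lt (not_le.mp h1)))
  have hd' : IsSMulRegular (Localization.AtPrime P) (algebraMap R _ d) :=
    Module.Flat.isSMulRegular_of_nonZeroDivisors
      (IsLocalization.map_nonZeroDivisors_le P.primeCompl (Localization.AtPrime P) ⟨d, hd, rfl⟩)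
  have hwd := hdepth.mem_span_singleton_of_forall_mul_mem hd' fun a ha => (hmem a).mpr ha
  exact (maximalIdeal (Localization.AtPrime P)).one_notMem ((hmem 1).mp (by rwa [one_mul]))

lemma CondS.mem_span_singleton_of_forall_mul_mem (hS : CondS R 2) {Q : Ideal R}
    (hQ : ∀ (P : Ideal R) (hP : P.IsPrime), primeHt R P hP ≤ 1 → ¬ Q ≤ P)
    {d : R} (hd : d ∈ R⁰) {y : R} (hy : ∀ s ∈ Q, s * y ∈ Ideal.span {d}) :
    y ∈ Ideal.span {d} := by
  by_contra hyd
  have hy0 : (Submodule.Quotient.mk y : R ⧸ Ideal.span {d}) ≠ 0 :=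
    fun h => hyd ((Submodule.Quotient.mk_eq_zero _).mp h)
  obtain ⟨P, hP, hyP⟩ := exists_le_isAssociatedPrime_of_isNoetherianRing R _ hy0
  refine hQ P hP.isPrime (hS.primeHt_le_one_of_isAssociatedPrime_quotient hd hP) fun s hs => hyP ?_
  rw [Submodule.mem_colon_singleton, Submodule.mem_bot, ← Submodule.Quotient.mk_smul,
    Submodule.Quotient.mk_eq_zero, smul_eq_mul]
  exact hy s hs

end

section
variable {R : Type*} [CommRing R]

lemma colon_not_le_of_map_le {I J P : Ideal R} [P.IsPrime] (hI : I.FG)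
    (h : I.map (algebraMap R (Localization.AtPrime P)) ≤
      J.map (algebraMap R (Localization.AtPrime P))) :
    ¬ J.colon I ≤ P := by
  obtain ⟨S, rfl⟩ := hI
  have hcolon : J.colon (Ideal.span (S : Set R) : Set R) = S.inf fun x => J.colon {x} := by
    ext r
    simp [Submodule.mem_colon, Submodule.mem_finsetInf]
  rw [hcolon, ‹P.IsPrime›.inf_le']
  rintro ⟨x, hxS, hxP⟩
  obtain ⟨u, hu, hux⟩ :=
    (IsLocalization.algebraMap_mem_map_algebraMap_iff P.primeCompl _ J x).mp
      (h (Ideal.mem_map_of_mem _ (Ideal.subset_span hxS)))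
  exact hu (hxP (by rwa [Submodule.mem_colon_singleton, smul_eq_mul]))

end

section
variable {R : Type*} [CommRing R] {I J : Ideal R} {d : R}

noncomputable def spanSingletonEquivOfMemNonZeroDivisors (hd : d ∈ R⁰) :
    R ≃ₗ[R] Ideal.span {d} :=
  (LinearEquiv.ofInjective (LinearMap.toSpanSingleton R R d)
    fun _ _ h => (mul_cancel_right_mem_nonZeroDivisors hd).mp h).trans
    (LinearEquiv.ofEq _ _ (LinearMap.range_toSpanSingleton d))

@[simp]
lemma coe_spanSingletonEquivOfMemNonZeroDivisors (hd : d ∈ R⁰) (r : R) :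
    (spanSingletonEquivOfMemNonZeroDivisors hd r : R) = r * d := rfl

def mulOfMemColon (hdI : d ∈ J.colon I) : I →ₗ[R] J :=
  (d • I.subtype).codRestrict J fun x => Submodule.mem_colon.mp hdI x x.2

@[simp]
lemma coe_mulOfMemColon (hdI : d ∈ J.colon I) (x : I) : (mulOfMemColon hdI x : R) = d * x := rfl

noncomputable def dualDivOfMemColon (hd : d ∈ R⁰) (hdI : d ∈ J.colon I)
    (hdiv : ∀ (f : Module.Dual R J) (x : I), f (mulOfMemColon hdI x) ∈ Ideal.span {d}) :
    Module.Dual R J →ₗ[R] Module.Dual R I where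
  toFun f := (spanSingletonEquivOfMemNonZeroDivisors hd).symm.toLinearMap ∘ₗ
    (f ∘ₗ mulOfMemColon hdI).codRestrict _ (hdiv f)
  map_add' f g := by
    ext x
    simp only [LinearMap.add_apply, LinearMap.comp_apply, LinearEquiv.coe_coe, ← map_add]
    rfl
  map_smul' c f := by
    ext x
    show _ = c • (spanSingletonEquivOfMemNonZeroDivisors hd).symm ⟨f (mulOfMemColon hdI x), _⟩
    rw [← map_smul]
    rfl

lemma dualDivOfMemColon_subtype (hd : d ∈ R⁰) (hdI : d ∈ J.colon I)
    (hdiv : ∀ (f : Module.Dual R J) (x : I), f (mulOfMemColon hdI x) ∈ Ideal.span {d}) :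
    dualDivOfMemColon hd hdI hdiv J.subtype = I.subtype := by
  ext x
  simp only [dualDivOfMemColon, LinearMap.coe_mk, AddHom.coe_mk, LinearMap.coe_comp,
    LinearEquiv.coe_coe, Function.comp_apply, Submodule.coe_subtype]
  rw [LinearEquiv.symm_apply_eq]
  ext
  simp [mul_comm]

end

lemma range_bidualToRing_le {R : Type*} [CommRing R] {I J : Ideal R}
    (χ : Module.Dual R J →ₗ[R] Module.Dual R I) (hχ : χ J.subtype = I.subtype) :
    LinearMap.range (bidualToRing R I) ≤ LinearMap.range (bidualToRing R J) := by
  rintro _ ⟨φ, rfl⟩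
  exact ⟨φ ∘ₗ χ, congrArg φ hχ⟩

theorem bidual_mono_general (R : Type*) [CommRing R] [IsNoetherianRing R]
    (hS : CondS R 2) (I J : Ideal R)
    (h : ∀ (𝔯 : Ideal R) (h𝔯 : 𝔯.IsPrime), primeHt R 𝔯 h𝔯 ≤ 1 →
      I.map (algebraMap R (Localization.AtPrime 𝔯))
        ≤ J.map (algebraMap R (Localization.AtPrime 𝔯))) :
    LinearMap.range (bidualToRing R I) ≤ LinearMap.range (bidualToRing R J) := by
  have hQ : ∀ (P : Ideal R) (hP : P.IsPrime), primeHt R P hP ≤ 1 → ¬ J.colon I ≤ P :=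
    fun P hP hP1 => colon_not_le_of_map_le (IsNoetherian.noetherian I) (h P hP hP1)
  obtain ⟨d, hdI, hd⟩ := (hS.mono one_le_two).exists_mem_nonZeroDivisors
    fun P hP hP0 => hQ P hP (hP0 ▸ zero_le_one)
  have hdiv (f : Module.Dual R J) (x : I) : f (mulOfMemColon hdI x) ∈ Ideal.span {d} := by
    refine hS.mem_span_singleton_of_forall_mul_mem hQ hd fun s hs => ?_
    have hsx : s • mulOfMemColon hdI x = d • ⟨s * x, Submodule.mem_colon.mp hs x x.2⟩ :=
      Subtype.ext (by simp [mul_left_comm])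
    rw [← smul_eq_mul, ← map_smul, hsx, map_smul, smul_eq_mul]
    exact Ideal.mul_mem_right _ _ (Ideal.mem_span_singleton_self d)
  exact range_bidualToRing_le _ (dualDivOfMemColon_subtype hd hdI hdiv)

/-- If a noetherian ring satisfies (G₀) and (S₂) and `I, J` are ideals with
`I·R_𝔯 ⊆ J·R_𝔯` for all primes `𝔯` of height at most `1`, then `I** ⊆ J**`
(as ideals of `R` under the canonical identification). -/
theorem bidual_mono (R : Type*) [CommRing R] [IsNoetherianRing R]
    (hG : CondG0 R) (hS : CondS R 2) (I J : Ideal R)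
    (h : ∀ (𝔯 : Ideal R) (h𝔯 : 𝔯.IsPrime), primeHt R 𝔯 h𝔯 ≤ 1 →
      I.map (algebraMap R (Localization.AtPrime 𝔯))
        ≤ J.map (algebraMap R (Localization.AtPrime 𝔯))) :
    LinearMap.range (bidualToRing R I) ≤ LinearMap.range (bidualToRing R J) :=
  bidual_mono_general R hS I J h
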